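/- Let E be a Banach space and M₁, M₂ : E → E commuting continuous linear maps, both commuting with a continuous linear map A : E → E. A function f : ℝ → E satisfies f'(t) = (A + M₁) f(t) for all t if and only if the function g(t) = exp(t M₂) (exp(-t M₁) (f(t))) satisfies g'(t) = (A + M₂) g(t) for all t. -/

import Mathlib

/-!
Multiplying a solution of `f' = B f` by `exp (t N)`, where `N` commutes with `B`, gives a solution
of `g' = (B + N) g`, and multiplying back by `exp (-t N)` undoes this. Applying this with `N = -M₁`
and then with `N = M₂` passes from `A + M₁` to `A` and from `A` to `A + M₂`.
-/

open NormedSpace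

section ExpConjugation

variable {E : Type*} [NormedAddCommGroup E] [NormedSpace ℝ E] [CompleteSpace E]

theorem exp_smul_neg_apply_exp_smul_apply (N : E →L[ℝ] E) (t : ℝ) (x : E) :
    exp (t • -N) (exp (t • N) x) = x := by
  -- `exp_add_of_commute` is stated for Banach algebras over `ℚ`.
  let _ : NormedAlgebra ℚ (E →L[ℝ] E) := NormedAlgebra.restrictScalars ℚ ℝ _
  have hinv : exp (t • -N) * exp (t • N) = 1 := by
    rw [smul_neg, ← exp_add_of_commute (Commute.refl (t • N)).neg_left, neg_add_cancel, exp_zero]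
  exact congrArg (· x) hinv

theorem hasDerivAt_exp_smul_apply {B N : E →L[ℝ] E} (hBN : Commute B N) {f : ℝ → E} {t : ℝ}
    (hf : HasDerivAt f (B (f t)) t) :
    HasDerivAt (fun s => exp (s • N) (f s)) ((B + N) (exp (t • N) (f t))) t := by
  convert (hasDerivAt_exp_smul_const' N t).clm_apply hf using 1
  have hcomm : exp (t • N) * B = B * exp (t • N) := ((hBN.smul_right t).exp_right).eq.symm
  rw [add_apply, add_comm, ← mul_apply_eq_comp B, ← hcomm]
  rfl

theorem forall_hasDerivAt_iff_exp_smul_apply {B N : E →L[ℝ] E} (hBN : Commute B N) (f : ℝ → E) :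
    (∀ t, HasDerivAt f (B (f t)) t) ↔
      ∀ t, HasDerivAt (fun s => exp (s • N) (f s)) ((B + N) (exp (t • N) (f t))) t := by
  refine ⟨fun hf t => hasDerivAt_exp_smul_apply hBN (hf t), fun hg t => ?_⟩
  have hf := hasDerivAt_exp_smul_apply (N := -N) (hBN.add_left (Commute.refl N)).neg_right (hg t)
  simpa only [exp_smul_neg_apply_exp_smul_apply, add_neg_cancel_right] using hf

end ExpConjugation

theorem stmt1_general {E : Type*} [NormedAddCommGroup E] [NormedSpace ℝ E] [CompleteSpace E]
    (A M₁ M₂ : E →L[ℝ] E)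
    (hA1 : A ∘L M₁ = M₁ ∘L A) (hA2 : A ∘L M₂ = M₂ ∘L A)
    (f : ℝ → E) :
    (∀ t : ℝ, HasDerivAt f ((A + M₁) (f t)) t) ↔
    (∀ t : ℝ, HasDerivAt
      (fun s => NormedSpace.exp (s • M₂) (NormedSpace.exp ((-s) • M₁) (f s)))
      ((A + M₂) (NormedSpace.exp (t • M₂) (NormedSpace.exp ((-t) • M₁) (f t)))) t) := by
  have hA1' : Commute (A + M₁) (-M₁) :=
    ((show Commute A M₁ from hA1).add_left (Commute.refl M₁)).neg_right
  simp only [neg_smul, ← smul_neg]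
  rw [forall_hasDerivAt_iff_exp_smul_apply hA1', add_neg_cancel_right]
  exact forall_hasDerivAt_iff_exp_smul_apply hA2 _

/-- `f' = (A + M₁) f` iff `g(t) = exp(tM₂)(exp(-tM₁)(f t))`
satisfies `g' = (A + M₂) g`, for pairwise commuting bounded operators. -/
theorem stmt1 {E : Type*} [NormedAddCommGroup E] [NormedSpace ℝ E] [CompleteSpace E]
    (A M₁ M₂ : E →L[ℝ] E)
    (h12 : M₁ ∘L M₂ = M₂ ∘L M₁) (hA1 : A ∘L M₁ = M₁ ∘L A) (hA2 : A ∘L M₂ = M₂ ∘L A)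
    (f : ℝ → E) (hf : Differentiable ℝ f) :
    (∀ t : ℝ, HasDerivAt f ((A + M₁) (f t)) t) ↔
    (∀ t : ℝ, HasDerivAt
      (fun s => NormedSpace.exp (s • M₂) (NormedSpace.exp ((-s) • M₁) (f s)))
      ((A + M₂) (NormedSpace.exp (t • M₂) (NormedSpace.exp ((-t) • M₁) (f t)))) t) :=
  stmt1_general A M₁ M₂ hA1 hA2 f
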